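/- Let n ≥ 2 be an integer and let μ be the Haar probability measure on the orthogonal group O(n) of n×n real matrices. Then ∫ Q₁₁⁴ dμ(Q) = 3 · ∫ Q₁₁²·Q₂₁² dμ(Q). -/

import Mathlib

/-!
Left multiplication by a fixed `g ∈ O(n)` preserves `μ` and sends the first column `Q e₁` of `Q`
to `g Q e₁`. Any two vectors of equal length are exchanged by a reflection, so the law of
`⟪u, Q e₁⟫` depends only on `‖u‖`. With `X = Q₁₁` and `Y = Q₂₁` this gives
`E (3X ± 4Y)⁴ = E (5X)⁴ = 625 E X⁴` and `E Y⁴ = E X⁴`; adding the two expansions cancels the odd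
terms and leaves `1250 E X⁴ = 674 E X⁴ + 1728 E X²Y²`.
-/

open MeasureTheory Matrix

/-- The Borel (= product) σ-algebra on matrices. -/
instance matrixMeasurableSpace {m n α : Type*} [MeasurableSpace α] :
    MeasurableSpace (Matrix m n α) :=
  inferInstanceAs (MeasurableSpace (m → n → α))

instance {m n α : Type*} [Countable m] [Countable n] [TopologicalSpace α] [MeasurableSpace α]
    [SecondCountableTopology α] [BorelSpace α] : BorelSpace (Matrix m n α) :=
  inferInstanceAs (BorelSpace (m → n → α))

namespace Matrix

variable {n : Type*} [Fintype n] [DecidableEq n]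

instance : BorelSpace (orthogonalGroup n ℝ) := Subtype.borelSpace _

theorem isCompact_orthogonalGroup : IsCompact (orthogonalGroup n ℝ : Set (Matrix n n ℝ)) := by
  have hclosed : IsClosed (orthogonalGroup n ℝ : Set (Matrix n n ℝ)) := isClosed_unitary
  exact (isCompact_univ_pi fun _ ↦ isCompact_univ_pi fun _ ↦ isCompact_Icc).of_isClosed_subset
    hclosed fun Q hQ i _ j _ ↦ abs_le.mp (entry_norm_bound_of_unitary hQ i j)

instance : CompactSpace (orthogonalGroup n ℝ) :=
  isCompact_iff_compactSpace.mp isCompact_orthogonalGroup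

theorem exists_mem_orthogonalGroup_toEuclideanLin_apply_eq
    (f : EuclideanSpace ℝ n ≃ₗᵢ[ℝ] EuclideanSpace ℝ n) :
    ∃ g ∈ orthogonalGroup n ℝ, ∀ y, toEuclideanLin g y = f y := by
  set b := (EuclideanSpace.basisFun n ℝ).toBasis
  refine ⟨LinearMap.toMatrix b b f.toLinearMap, f.toMatrix_mem_unitaryGroup _ _, fun y ↦ ?_⟩
  rw [toEuclideanLin_eq_toLin_orthonormal, toLin_toMatrix]
  rfl

theorem integral_comp_inner_toEuclideanLin_eq_of_norm_eq (μ : Measure (orthogonalGroup n ℝ))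
    [μ.IsMulLeftInvariant] (f : ℝ → ℝ) (x : EuclideanSpace ℝ n) {u v : EuclideanSpace ℝ n}
    (huv : ‖u‖ = ‖v‖) :
    ∫ Q, f (inner ℝ u (toEuclideanLin (Q : Matrix n n ℝ) x)) ∂μ
      = ∫ Q, f (inner ℝ v (toEuclideanLin (Q : Matrix n n ℝ) x)) ∂μ := by
  set R := (ℝ ∙ (u - v))ᗮ.reflection
  obtain ⟨g, hg, hgR⟩ := exists_mem_orthogonalGroup_toEuclideanLin_apply_eq R
  have hR : ∀ y, inner ℝ u (R y) = inner ℝ v y := fun y ↦ by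
    rw [← Submodule.reflection_sub huv, ← R.inner_map_map, Submodule.reflection_reflection]
  have hmul : ∀ Q : orthogonalGroup n ℝ,
      toEuclideanLin ((⟨g, hg⟩ * Q : orthogonalGroup n ℝ) : Matrix n n ℝ) x
        = R (toEuclideanLin (Q : Matrix n n ℝ) x) := fun Q ↦ by
    rw [← hgR]
    exact LinearMap.congr_fun (toLpLin_mul_same 2 g (Q : Matrix n n ℝ)) x
  calc ∫ Q, f (inner ℝ u (toEuclideanLin (Q : Matrix n n ℝ) x)) ∂μ
      = ∫ Q, f (inner ℝ u
          (toEuclideanLin ((⟨g, hg⟩ * Q : orthogonalGroup n ℝ) : Matrix n n ℝ) x)) ∂μ :=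
        (integral_mul_left_eq_self _ _).symm
    _ = ∫ Q, f (inner ℝ v (toEuclideanLin (Q : Matrix n n ℝ) x)) ∂μ := by
        simp only [hmul, hR]

theorem integral_comp_mul_apply_add_mul_apply_eq (μ : Measure (orthogonalGroup n ℝ))
    [μ.IsMulLeftInvariant] (f : ℝ → ℝ) {i k : n} (hik : i ≠ k) (j : n) (a b r : ℝ)
    (habr : a ^ 2 + b ^ 2 = r ^ 2) :
    ∫ Q, f (a * (Q : Matrix n n ℝ) i j + b * (Q : Matrix n n ℝ) k j) ∂μ
      = ∫ Q, f (r * (Q : Matrix n n ℝ) i j) ∂μ := by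
  have hnorm : ‖EuclideanSpace.single i a + EuclideanSpace.single k b‖
      = ‖EuclideanSpace.single i r‖ := by
    rw [← sq_eq_sq₀ (norm_nonneg _) (norm_nonneg _), sq, sq,
      norm_add_sq_eq_norm_sq_add_norm_sq_real
        (by simp [EuclideanSpace.inner_single_left, hik.symm])]
    simpa [← sq] using habr
  simpa [inner_add_left, EuclideanSpace.inner_single_left, toLpLin_apply] using
    integral_comp_inner_toEuclideanLin_eq_of_norm_eq μ f (EuclideanSpace.single j 1) hnorm

end Matrix

/-- for a Haar-distributed orthogonal matrix,
`∫ Q₁₁⁴ dμ = 3 ∫ Q₁₁²Q₂₁² dμ`. -/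
theorem haar_orthogonal_fourth_moment_ratio
    (n : ℕ) (hn : 2 ≤ n)
    (μ : Measure ↥(Matrix.orthogonalGroup (Fin n) ℝ))
    [IsProbabilityMeasure μ] [μ.IsMulLeftInvariant] :
    ∫ Q, ((Q : Matrix (Fin n) (Fin n) ℝ) ⟨0, by omega⟩ ⟨0, by omega⟩) ^ 4 ∂μ
      = 3 * ∫ Q, ((Q : Matrix (Fin n) (Fin n) ℝ) ⟨0, by omega⟩ ⟨0, by omega⟩) ^ 2
          * ((Q : Matrix (Fin n) (Fin n) ℝ) ⟨1, by omega⟩ ⟨0, by omega⟩) ^ 2 ∂μ := by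
  set i : Fin n := ⟨0, by omega⟩
  set k : Fin n := ⟨1, by omega⟩
  have hik : i ≠ k := by simp [i, k, Fin.ext_iff]
  have hplus := integral_comp_mul_apply_add_mul_apply_eq μ (· ^ 4) hik i 3 4 5 (by norm_num)
  have hminus := integral_comp_mul_apply_add_mul_apply_eq μ (· ^ 4) hik i 3 (-4) 5 (by norm_num)
  have hswap := integral_comp_mul_apply_add_mul_apply_eq μ (· ^ 4) hik i 0 1 1 (by norm_num)
  simp only [zero_mul, zero_add, one_mul] at hplus hminus hswap
  set X : orthogonalGroup (Fin n) ℝ → ℝ := fun Q ↦ (Q : Matrix (Fin n) (Fin n) ℝ) i i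
  set Y : orthogonalGroup (Fin n) ℝ → ℝ := fun Q ↦ (Q : Matrix (Fin n) (Fin n) ℝ) k i
  have hX : Continuous X := continuous_subtype_val.matrix_elem i i
  have hY : Continuous Y := continuous_subtype_val.matrix_elem k i
  have hint : ∀ f : orthogonalGroup (Fin n) ℝ → ℝ, Continuous f → Integrable f μ :=
    fun f hf ↦ hf.integrable_of_hasCompactSupport (.of_compactSpace f)
  have hexpand : ∫ Q, (3 * X Q + 4 * Y Q) ^ 4 ∂μ + ∫ Q, (3 * X Q + -4 * Y Q) ^ 4 ∂μ
      = 162 * ∫ Q, X Q ^ 4 ∂μ + 1728 * ∫ Q, X Q ^ 2 * Y Q ^ 2 ∂μ + 512 * ∫ Q, Y Q ^ 4 ∂μ := by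
    rw [← integral_add (hint _ (by fun_prop)) (hint _ (by fun_prop)), ← integral_const_mul,
      ← integral_const_mul, ← integral_const_mul,
      ← integral_add (hint _ (by fun_prop)) (hint _ (by fun_prop)),
      ← integral_add (hint _ (by fun_prop)) (hint _ (by fun_prop))]
    congr 1 with Q
    ring
  have hscale : ∫ Q, (5 * X Q) ^ 4 ∂μ = 625 * ∫ Q, X Q ^ 4 ∂μ := by
    simp_rw [mul_pow, integral_const_mul]
    norm_num
  change ∫ Q, X Q ^ 4 ∂μ = 3 * ∫ Q, X Q ^ 2 * Y Q ^ 2 ∂μ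
  linarith
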